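/- arXiv:1002.4312 — 4 statements merged into one kernel-verified Lean document; each statement's English description precedes it below -/
import Mathlib

section
/- Let P be a graded poset and F : P → Ab a projective object of the functor category Ab^P. Then for every object i₀ of P, the quotient Coker(i₀) = F(i₀)/Im(i₀) is a projective (i.e., free) abelian group. -/
/-!
The quotient map `F(i₀) → Coker(i₀)` extends to a natural transformation from `F` to the diagram
with constant value `Coker(i₀)` and zero transition maps. Projectivity of `F` lifts it through
the epimorphism induced by `ℤ[Coker(i₀)] → Coker(i₀)`; the component of the lift at `i₀` kills
`Im(i₀)` and so gives a section of that epimorphism. Hence `Coker(i₀)` is a projective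
`ℤ`-module, and projective modules over a PID are free, because a submodule of a free module
`R^(ι)` has a basis in echelon form with respect to a well-order on `ι`.
-/

open CategoryTheory

variable {P : Type} [PartialOrder P]

/-- `Im F i₀` is the subgroup of `F.obj i₀` generated by the images of `F.map α`
over all nonidentity morphisms `α : i ⟶ i₀` (in a poset these correspond to `i < i₀`). -/
def imSubgroup (F : P ⥤ AddCommGrpCat) (i₀ : P) : AddSubgroup (F.obj i₀) :=
  ⨆ i : {i : P // i < i₀}, (F.map (homOfLE i.2.le)).hom.range

open Finsupp Submodule Set

section Triangular

variable {ι : Type*} [LinearOrder ι]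

theorem Finsupp.linearIndependent_of_triangular {R κ : Type*} [Ring R] [NoZeroDivisors R]
    (v : κ → ι →₀ R) (p : κ → ι) (hp : Function.Injective p)
    (hsupp : ∀ k, v k ∈ supported R R (Iic (p k))) (hpiv : ∀ k, v k (p k) ≠ 0) :
    LinearIndependent R v := by
  classical
  rw [linearIndependent_iff]
  intro l hl
  by_contra hl0
  obtain ⟨k, hk, hmax⟩ := l.support.exists_max_image p (support_nonempty_iff.mpr hl0)
  have hvanish : ∀ k' ∈ l.support, k' ≠ k → (l k' • v k') (p k) = 0 := by
    intro k' hk' hne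
    have hlt : p k' < p k := (hmax k' hk').lt_of_ne (hp.ne hne)
    rw [smul_apply, notMem_support_iff.mp fun h => (hsupp k' h).not_gt hlt, smul_zero]
  have hpivot : l k * v k (p k) = 0 := by
    have := DFunLike.congr_fun hl (p k)
    rwa [linearCombination_apply, Finsupp.sum, finsetSum_apply,
      Finset.sum_eq_single k hvanish (fun h => absurd hk h), smul_apply] at this
  exact mul_ne_zero (mem_support_iff.mp hk) (hpiv k) hpivot

theorem Finsupp.le_span_of_triangular {R : Type*} [CommRing R] [WellFoundedLT ι]
    {N : Submodule R (ι →₀ R)} (b : ι → ι →₀ R) (hbN : ∀ i, b i ∈ N)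
    (hsupp : ∀ i, b i ∈ supported R R (Iic i))
    (hdvd : ∀ i, ∀ x ∈ N, x ∈ supported R R (Iic i) → b i i ∣ x i) :
    N ≤ span R (range fun t : {i // b i i ≠ 0} => b t) := by
  intro x hx
  induction hm : x.support.max using WellFoundedLT.induction generalizing x with
  | ind m ih =>
    rcases eq_or_ne x 0 with rfl | hx0
    · exact zero_mem _
    obtain ⟨j, hj⟩ := Finset.max_of_nonempty (support_nonempty_iff.mpr hx0)
    subst hm
    have hxj : x j ≠ 0 := mem_support_iff.mp (Finset.mem_of_max hj)
    have hxsupp : x ∈ supported R R (Iic j) := fun i hi =>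
      WithBot.coe_le_coe.mp (hj ▸ Finset.le_max hi)
    obtain ⟨c, hc⟩ := hdvd j x hx hxsupp
    have hbj : b j j ≠ 0 := fun h => hxj (by rw [hc, h, zero_mul])
    have hbspan : b j ∈ span R (range fun t : {i // b i i ≠ 0} => b t) :=
      subset_span ⟨⟨j, hbj⟩, rfl⟩
    set y := x - c • b j
    have hyj : y j = 0 := by simp [y, hc, mul_comm]
    have hylt : y.support.max < j := by
      refine lt_of_le_of_ne (Finset.max_le fun i hi => ?_) fun h => ?_
      · exact WithBot.coe_le_coe.mpr
          ((supported R R (Iic j)).sub_mem hxsupp (smul_mem _ c (hsupp j)) hi)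
      · exact mem_support_iff.mp (Finset.mem_of_max h) hyj
    have hy : y ∈ span R _ := ih _ (hj ▸ hylt) (N.sub_mem hx (N.smul_mem c (hbN j))) rfl
    simpa [y] using add_mem hy (smul_mem _ c hbspan)

end Triangular

theorem Submodule.exists_mem_forall_dvd {R M : Type*} [CommRing R] [IsPrincipalIdealRing R]
    [AddCommGroup M] [Module R M] (S : Submodule R M) (f : M →ₗ[R] R) :
    ∃ b ∈ S, ∀ x ∈ S, f b ∣ f x := by
  obtain ⟨b, hb, hfb⟩ := mem_map.mp (IsPrincipal.generator_mem (S.map f))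
  exact ⟨b, hb, fun x hx =>
    hfb ▸ (IsPrincipal.mem_iff_generator_dvd _).mp (mem_map_of_mem hx)⟩

section PID

variable {R : Type*} [CommRing R] [IsDomain R] [IsPrincipalIdealRing R]

theorem Submodule.free_of_isPrincipalIdealRing {ι : Type*} (N : Submodule R (ι →₀ R)) :
    Module.Free R N := by
  let _ : LinearOrder ι := IsWellOrder.linearOrder WellOrderingRel
  have : WellFoundedLT ι := ⟨WellOrderingRel.isWellOrder.wf⟩
  choose b hb hdvd using fun i =>
    (N ⊓ supported R R (Iic i)).exists_mem_forall_dvd (lapply i)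
  let v : {i // b i i ≠ 0} → ι →₀ R := fun t => b t
  have hli : LinearIndependent R v := linearIndependent_of_triangular v Subtype.val
    Subtype.val_injective (fun t => (hb t).2) fun t => t.2
  have hspan : span R (range v) = N := le_antisymm
    (span_le.mpr <| range_subset_iff.mpr fun t => (hb t).1)
    (le_span_of_triangular b (fun i => (hb i).1) (fun i => (hb i).2)
      fun i x hx hxi => hdvd i x ⟨hx, hxi⟩)
  exact hspan ▸ Module.Free.of_basis (Module.Basis.span hli)

theorem Module.free_of_projective_of_isPrincipalIdealRing {M : Type*} [AddCommGroup M]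
    [Module R M] [Module.Projective R M] : Module.Free R M := by
  obtain ⟨s, hs⟩ := Module.Projective.out (R := R) (P := M)
  have := (LinearMap.range s).free_of_isPrincipalIdealRing
  exact Module.Free.of_equiv (LinearEquiv.ofInjective s hs.injective).symm

end PID

universe u

open Classical in
noncomputable def constZeroDiagram (A : AddCommGrpCat) : P ⥤ AddCommGrpCat where
  obj _ := A
  map {i j} _ := if i = j then 𝟙 A else 0
  map_id _ := if_pos rfl
  map_comp {i j k} f g := by
    obtain rfl | hij := eq_or_ne i j
    · simp
    · have hik : i ≠ k := fun h => hij ((leOfHom f).antisymm (h ▸ leOfHom g))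
      simp [hij, hik]

open Classical in
theorem constZeroDiagram_map (A : AddCommGrpCat) {i j : P} (f : i ⟶ j) :
    (constZeroDiagram A).map f = if i = j then 𝟙 A else 0 := rfl

noncomputable def constZeroDiagramMap {A B : AddCommGrpCat} (π : A ⟶ B) :
    (constZeroDiagram A : P ⥤ _) ⟶ constZeroDiagram B where
  app _ := π
  naturality i j f := by
    rw [constZeroDiagram_map, constZeroDiagram_map]
    split_ifs
    · exact (Category.id_comp π).trans (Category.comp_id π).symm
    · exact Limits.zero_comp.trans Limits.comp_zero.symm

instance {A B : AddCommGrpCat} (π : A ⟶ B) [Epi π] :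
    Epi (constZeroDiagramMap π : (constZeroDiagram A : P ⥤ _) ⟶ _) :=
  have : ∀ i, Epi ((constZeroDiagramMap π : (constZeroDiagram A : P ⥤ _) ⟶ _).app i) :=
    fun _ => ‹Epi π›
  NatTrans.epi_of_epi_app _

theorem map_mem_imSubgroup (F : P ⥤ AddCommGrpCat) {i i₀ : P} (h : i < i₀) (x : F.obj i) :
    F.map (homOfLE h.le) x ∈ imSubgroup F i₀ :=
  le_iSup (fun i : {i : P // i < i₀} => (F.map (homOfLE i.2.le)).hom.range) ⟨i, h⟩ ⟨x, rfl⟩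

theorem imSubgroup_le_ker_app {F : P ⥤ AddCommGrpCat} {A : AddCommGrpCat}
    (l : F ⟶ constZeroDiagram A) (i₀ : P) : imSubgroup F i₀ ≤ (l.app i₀).hom.ker := by
  refine iSup_le fun ⟨i, hi⟩ => ?_
  rintro _ ⟨x, rfl⟩
  have := congr($(l.naturality (homOfLE hi.le)) x)
  simp only [constZeroDiagram_map, if_neg hi.ne] at this
  exact this

open Classical in
noncomputable def toCokerApp (F : P ⥤ AddCommGrpCat.{u}) (i₀ j : P) :
    F.obj j ⟶ AddCommGrpCat.of (F.obj i₀ ⧸ imSubgroup F i₀) :=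
  if h : j ≤ i₀ then F.map (homOfLE h) ≫ AddCommGrpCat.ofHom (QuotientAddGroup.mk' _) else 0

theorem toCokerApp_self (F : P ⥤ AddCommGrpCat.{u}) (i₀ : P) (x : F.obj i₀) :
    toCokerApp F i₀ i₀ x = QuotientAddGroup.mk x := by
  simp [toCokerApp]

theorem map_comp_toCokerApp_of_ne (F : P ⥤ AddCommGrpCat.{u}) (i₀ : P) {i j : P} (f : i ⟶ j)
    (hij : i ≠ j) : F.map f ≫ toCokerApp F i₀ j = 0 := by
  unfold toCokerApp
  split_ifs with hj
  · have hi : i < i₀ := lt_of_lt_of_le (lt_of_le_of_ne (leOfHom f) hij) hj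
    rw [← Category.assoc, ← F.map_comp, Subsingleton.elim (f ≫ homOfLE hj) (homOfLE hi.le)]
    ext x
    simpa using map_mem_imSubgroup F hi x
  · exact Limits.comp_zero

noncomputable def toCoker (F : P ⥤ AddCommGrpCat.{u}) (i₀ : P) :
    F ⟶ constZeroDiagram (AddCommGrpCat.of (F.obj i₀ ⧸ imSubgroup F i₀)) where
  app := toCokerApp F i₀
  naturality i j f := by
    rw [constZeroDiagram_map]
    obtain rfl | hij := eq_or_ne i j
    · rw [Subsingleton.elim f (𝟙 i), F.map_id, if_pos rfl]
      exact (Category.id_comp _).trans (Category.comp_id _).symm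
    rw [if_neg hij]
    exact (map_comp_toCokerApp_of_ne F i₀ f hij).trans Limits.comp_zero.symm

theorem projective_coker (F : P ⥤ AddCommGrpCat.{u}) [Projective F] (i₀ : P) :
    Module.Projective ℤ (F.obj i₀ ⧸ imSubgroup F i₀) := by
  let Q := F.obj i₀ ⧸ imSubgroup F i₀
  let π : AddCommGrpCat.of (Q →₀ ℤ) ⟶ AddCommGrpCat.of Q :=
    AddCommGrpCat.ofHom (Finsupp.linearCombination ℤ id).toAddMonoidHom
  have : Epi π := (AddCommGrpCat.epi_iff_surjective π).mpr fun q =>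
    ⟨Finsupp.single q 1, by simp [π]⟩
  obtain ⟨l, hl⟩ := Projective.factors (toCoker F i₀) (constZeroDiagramMap π)
  refine ⟨(QuotientAddGroup.lift _ (l.app i₀).hom (imSubgroup_le_ker_app l i₀)).toIntLinearMap,
    fun q => ?_⟩
  induction q using QuotientAddGroup.induction_on with
  | H x =>
    exact congr($(hl).app i₀ x).trans (toCokerApp_self F i₀ x)

theorem coker_free_of_projective_general
    (F : P ⥤ AddCommGrpCat) (hF : Projective F) (i₀ : P) :
    Module.Free ℤ (F.obj i₀ ⧸ imSubgroup F i₀) :=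
  have := projective_coker F i₀
  Module.free_of_projective_of_isPrincipalIdealRing

/-- Let `P` be a graded poset and `F : P ⥤ Ab` a projective object of
the functor category `Ab^P`. Then for every object `i₀` the quotient
`Coker(i₀) = F(i₀)/Im(i₀)` is a projective, i.e. free, abelian group. -/
theorem coker_free_of_projective
    (deg : P → ℤ) (hmono : Monotone deg)
    (hcov : ∀ ⦃a b : P⦄, a ⋖ b → deg b = deg a + 1)
    (F : P ⥤ AddCommGrpCat) (hF : Projective F) (i₀ : P) :
    Module.Free ℤ (F.obj i₀ ⧸ imSubgroup F i₀) :=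
  coker_free_of_projective_general F hF i₀
end

section
/- Let P be the pushout category a → b, a → c (graded with deg(a)=0, deg(b)=deg(c)=1). A functor F : P → Ab is projective in Ab^P if and only if F(a), F(b)/Im F(a→b) and F(c)/Im F(a→c) are free abelian groups and both F(a→b) and F(a→c) are monomorphisms. -/
/-!
If `F` is projective it is a retract of its free cover `p ↦ ℤ[Σ x ≤ p, F x]`, a sum of
representables: there the structure maps are induced by inclusions of bases, so they are injective
with free cokernels. A retract inherits injectivity, and `F a`, `F b / F a`, `F c / F a` embed into
the corresponding free groups of the cover, hence are free, since subgroups of free abelian groups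
are free.

Conversely, lift a map out of `F` first at `a`, using that `F a` is free. Over `p = b, c` the
inclusion `F a → F p` splits because its cokernel is free, so the lift at `a` extends to a lift at
`p`; as `b` and `c` are incomparable there is no further compatibility to check.
-/

open CategoryTheory

universe u v

namespace Finsupp

variable {R ι : Type*} [LinearOrder ι]

lemma mem_supported_Iio [Semiring R] {i : ι} {x : ι →₀ R} (hx : x ∈ supported R R (Set.Iic i))
    (hxi : x i = 0) : x ∈ supported R R (Set.Iio i) := fun j hj =>
  lt_of_le_of_ne ((mem_supported _ _).1 hx hj) (by rintro rfl; exact mem_support_iff.1 hj hxi)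

lemma linearIndependent_of_triangular_s6 [Ring R] [NoZeroDivisors R] {d : ι → R}
    (y : ι → ι →₀ R) (hy : ∀ i, y i ∈ supported R R (Set.Iic i)) (hd : ∀ i, y i i = d i) :
    LinearIndependent R (fun j : {i // d i ≠ 0} => y j) := by
  classical
  rw [linearIndependent_iff']
  intro s g hsum j hj
  by_contra hgj
  set t := s.filter (fun j => g j ≠ 0)
  have ht : t.Nonempty := ⟨j, Finset.mem_filter.2 ⟨hj, hgj⟩⟩
  obtain ⟨hk_s, hk_g⟩ := Finset.mem_filter.1 (t.max'_mem ht)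
  set k := t.max' ht
  have hk := congrArg (fun z : ι →₀ R => z k) hsum
  simp only [finsetSum_apply, smul_apply, smul_eq_mul, coe_zero, Pi.zero_apply] at hk
  rw [Finset.sum_eq_single_of_mem k hk_s, hd] at hk
  · exact mul_ne_zero hk_g k.2 hk
  intro i hi hik
  by_cases hgi : g i = 0
  · rw [hgi, zero_mul]
  have hlt : i < k := lt_of_le_of_ne (t.le_max' i (Finset.mem_filter.2 ⟨hi, hgi⟩)) hik
  rw [notMem_support_iff.1 fun h => not_le.2 hlt ((mem_supported _ _).1 (hy i) h), mul_zero]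

theorem free_quotient_range_mapDomain {α β : Type*} (σ : α → β) :
    Module.Free ℤ ((β →₀ ℤ) ⧸ (mapDomain.addMonoidHom σ).range) := by
  let v : ↥(Set.range σ)ᶜ → β := (↑)
  have hc := isCompl_range_lmapDomain_span (R := ℤ) (u := σ) (v := v)
    (by rw [Subtype.range_coe]; exact isCompl_compl)
  have : Module.Free ℤ (Submodule.span ℤ (Set.range fun x => single (v x) (1 : ℤ))) :=
    .of_basis (.span ((linearIndependent_single_one ℤ β).comp v Subtype.val_injective))
  exact Module.Free.of_equiv (Submodule.quotientEquivOfIsCompl _ _ hc).symm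

end Finsupp

namespace Submodule

open Finsupp (supported lapply)

variable {R ι : Type*} [CommRing R] [LinearOrder ι] (N : Submodule R (ι →₀ R))

noncomputable def leadingCoeffIdeal (i : ι) : Ideal R :=
  (N ⊓ supported R R (Set.Iic i)).map (lapply i)

variable [IsPrincipalIdealRing R]

noncomputable def leadingCoeffGenerator (i : ι) : R :=
  IsPrincipal.generator (N.leadingCoeffIdeal i)

lemma exists_mem_leadingCoeff_eq_generator (i : ι) :
    ∃ y ∈ N ⊓ supported R R (Set.Iic i), y i = N.leadingCoeffGenerator i :=
  mem_map.1 (IsPrincipal.generator_mem (N.leadingCoeffIdeal i))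

lemma le_span_of_leadingCoeff_eq_generator [WellFoundedLT ι] {y : ι → ι →₀ R}
    (hy : ∀ i, y i ∈ N ⊓ supported R R (Set.Iic i))
    (hyd : ∀ i, y i i = N.leadingCoeffGenerator i) :
    N ≤ span R (Set.range fun j : {i // N.leadingCoeffGenerator i ≠ 0} => y j) := by
  set B := span R (Set.range fun j : {i // N.leadingCoeffGenerator i ≠ 0} => y j)
  -- Induction on a strict upper bound `m` of the support: subtracting from `x` a multiple of
  -- `y k`, for `k` the largest index in the support of `x`, lowers the bound to `k`.
  suffices h : ∀ m : WithTop ι, ∀ x ∈ N, (∀ j ∈ x.support, (j : WithTop ι) < m) → x ∈ B from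
    fun x hx => h ⊤ x hx fun j _ => WithTop.coe_lt_top j
  intro m
  induction m using WellFoundedLT.induction with
  | ind m ih =>
    intro x hxN hxm
    obtain rfl | hne := eq_or_ne x 0
    · exact B.zero_mem
    have hsupp := Finsupp.support_nonempty_iff.2 hne
    set k := x.support.max' hsupp
    have hxk : x ∈ supported R R (Set.Iic k) := fun j hj => x.support.le_max' j hj
    have hbelow : ∀ z ∈ N, z ∈ supported R R (Set.Iio k) → z ∈ B := fun z hzN hz =>
      ih k (hxm k (x.support.max'_mem hsupp)) z hzN fun j hj => WithTop.coe_lt_coe.2 (hz hj)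
    obtain ⟨c, hc⟩ := (IsPrincipal.mem_iff_eq_smul_generator _).1
      (show x k ∈ N.leadingCoeffIdeal k from ⟨x, ⟨hxN, hxk⟩, rfl⟩)
    have hyk : c • y k ∈ B := by
      by_cases hdk : N.leadingCoeffGenerator k = 0
      · exact B.smul_mem c (hbelow _ (hy k).1 (Finsupp.mem_supported_Iio (hy k).2 (hyd k ▸ hdk)))
      · exact B.smul_mem c (subset_span ⟨⟨k, hdk⟩, rfl⟩)
    have hrest : x - c • y k ∈ B := by
      refine hbelow _ (N.sub_mem hxN (N.smul_mem c (hy k).1)) (Finsupp.mem_supported_Iio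
        ((supported R R _).sub_mem hxk ((supported R R _).smul_mem c (hy k).2)) ?_)
      rw [Finsupp.sub_apply, Finsupp.smul_apply, hyd, hc]
      exact sub_self _
    simpa using B.add_mem hrest hyk

theorem free_of_isPrincipalIdealRing_s6 [IsDomain R] [WellFoundedLT ι] : Module.Free R N := by
  choose y hy hyd using N.exists_mem_leadingCoeff_eq_generator
  have hspan : span R (Set.range fun j : {i // N.leadingCoeffGenerator i ≠ 0} =>
      y j) = N :=
    le_antisymm (span_le.2 (Set.range_subset_iff.2 fun j => (hy j).1))
      (N.le_span_of_leadingCoeff_eq_generator hy hyd)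
  exact .of_basis ((Module.Basis.span
    (Finsupp.linearIndependent_of_triangular_s6 y (fun i => (hy i).2) hyd)).map
      (LinearEquiv.ofEq _ _ hspan))

end Submodule

theorem Module.Free.of_injective {R M N : Type*} [CommRing R] [IsDomain R]
    [IsPrincipalIdealRing R] [AddCommGroup M] [Module R M] [AddCommGroup N] [Module R N]
    [Module.Free R N] (f : M →ₗ[R] N) (hf : Function.Injective f) : Module.Free R M := by
  obtain ⟨_, _⟩ := exists_wellFoundedLT (Module.Free.ChooseBasisIndex R N)
  let b := Module.Free.chooseBasis R N
  let g : M →ₗ[R] (Module.Free.ChooseBasisIndex R N →₀ R) := b.repr.toLinearMap ∘ₗ f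
  have := (LinearMap.range g).free_of_isPrincipalIdealRing_s6
  exact .of_equiv (LinearEquiv.ofInjective g (b.repr.injective.comp hf)).symm

namespace AddMonoidHom

variable {A B C D : Type*} [AddCommGroup A] [AddCommGroup B] [AddCommGroup C] [AddCommGroup D]

theorem exists_comp_eq_of_free [Module.Free ℤ A] (e : B →+ C) (he : Function.Surjective e)
    (f : A →+ C) : ∃ l : A →+ B, e.comp l = f :=
  let ⟨l, hl⟩ := Module.projective_lifting_property e.toIntLinearMap f.toIntLinearMap he
  ⟨l.toAddMonoidHom, congrArg LinearMap.toAddMonoidHom hl⟩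

theorem exists_leftInverse_of_free_quotient (i : A →+ B) (hi : Function.Injective i)
    [Module.Free ℤ (B ⧸ i.range)] : ∃ r : B →+ A, r.comp i = .id A := by
  set π := QuotientAddGroup.mk' i.range
  obtain ⟨s, hs⟩ := exists_comp_eq_of_free π (QuotientAddGroup.mk'_surjective _) (.id _)
  have hπi : π.comp i = 0 := by
    ext a
    exact (QuotientAddGroup.eq_zero_iff (i a)).2 (i.mem_range.2 ⟨a, rfl⟩)
  -- `s` splits `π`, so `b ↦ b - s (π b)` is a projection onto `i.range`.
  have hmem : ∀ b, (AddMonoidHom.id B - s.comp π) b ∈ i.range := fun b => by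
    rw [← QuotientAddGroup.eq_zero_iff]
    change π (b - s (π b)) = 0
    rw [map_sub, ← comp_apply π s, hs, id_apply, sub_self]
  refine ⟨(ofInjective hi).symm.toAddMonoidHom.comp ((.id B - s.comp π).codRestrict _ hmem), ?_⟩
  ext a
  refine (ofInjective hi).symm_apply_eq.2 (Subtype.ext ?_)
  change i a - s (π (i a)) = i a
  rw [← comp_apply π i, hπi, zero_apply, map_zero, sub_zero]

theorem exists_lift_extending_of_free_quotient (i : A →+ B) (hi : Function.Injective i)
    [Module.Free ℤ (B ⧸ i.range)] (e : D →+ C) (he : Function.Surjective e) (g : B →+ C)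
    (l₀ : A →+ D) (hl₀ : e.comp l₀ = g.comp i) :
    ∃ l : B →+ D, e.comp l = g ∧ l.comp i = l₀ := by
  obtain ⟨r, hr⟩ := exists_leftInverse_of_free_quotient i hi
  -- Correct `l₀ ∘ r` by a lift of its defect `g - e ∘ l₀ ∘ r`, which factors through `B ⧸ i.range`.
  have hdefect : i.range ≤ (g - e.comp (l₀.comp r)).ker := by
    rintro _ ⟨a, rfl⟩
    change g (i a) - e (l₀ (r (i a))) = 0
    rw [← comp_apply r i, hr, id_apply, ← comp_apply e l₀, hl₀, comp_apply, sub_self]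
  obtain ⟨t, ht⟩ := exists_comp_eq_of_free e he (QuotientAddGroup.lift _ _ hdefect)
  refine ⟨l₀.comp r + t.comp (QuotientAddGroup.mk' i.range), ?_, ?_⟩
  · ext b
    have := congrArg (fun φ => φ (b : B ⧸ i.range)) ht
    simp only [comp_apply, QuotientAddGroup.lift_mk, sub_apply] at this
    simp [this]
  · ext a
    simp [← comp_apply r i, hr, (QuotientAddGroup.eq_zero_iff (i a)).2 (i.mem_range.2 ⟨a, rfl⟩)]

end AddMonoidHom

namespace CategoryTheory.Functor

variable {P : Type v} [Preorder P] (F : P ⥤ AddCommGrpCat.{max u v})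

abbrev ElementsBelow (p : P) : Type (max u v) := Σ x : {x : P // x ≤ p}, F.obj x

def elementsBelowMap {p q : P} (h : p ≤ q) : F.ElementsBelow p → F.ElementsBelow q :=
  _root_.Sigma.map (Subtype.map id fun _ hx => hx.trans h) fun _ => id

lemma elementsBelowMap_injective {p q : P} (h : p ≤ q) :
    Function.Injective (F.elementsBelowMap h) :=
  (Subtype.map_injective _ Function.injective_id).sigma_map fun _ => Function.injective_id

noncomputable def freeCover : P ⥤ AddCommGrpCat.{max u v} where
  obj p := AddCommGrpCat.of (F.ElementsBelow p →₀ ℤ)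
  map h := AddCommGrpCat.ofHom (Finsupp.mapDomain.addMonoidHom (F.elementsBelowMap (leOfHom h)))
  map_id _ := AddCommGrpCat.hom_ext Finsupp.mapDomain.addMonoidHom_id
  map_comp f g := AddCommGrpCat.hom_ext <|
    Finsupp.mapDomain.addMonoidHom_comp (F.elementsBelowMap (leOfHom g))
      (F.elementsBelowMap (leOfHom f))

noncomputable def freeCoverπ : F.freeCover ⟶ F where
  app p := AddCommGrpCat.ofHom (Finsupp.liftAddHom fun t : F.ElementsBelow p =>
    zmultiplesHom _ (F.map (homOfLE t.1.2) t.2))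
  naturality p q h := AddCommGrpCat.hom_ext (Finsupp.addHom_ext fun t n => by
    change Finsupp.liftAddHom _ (Finsupp.mapDomain _ (Finsupp.single t n)) =
      F.map h (Finsupp.liftAddHom _ (Finsupp.single t n))
    rw [Finsupp.mapDomain_single, Finsupp.liftAddHom_apply_single,
      Finsupp.liftAddHom_apply_single, zmultiplesHom_apply, zmultiplesHom_apply, _root_.map_zsmul,
      ← ConcreteCategory.comp_apply, ← F.map_comp]
    rfl)

lemma freeCoverπ_app_single {p : P} (t : F.ElementsBelow p) (n : ℤ) :
    F.freeCoverπ.app p (Finsupp.single t n) = n • F.map (homOfLE t.1.2) t.2 :=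
  Finsupp.liftAddHom_apply_single _ _ _

lemma freeCoverπ_app_surjective (p : P) : Function.Surjective (F.freeCoverπ.app p) := fun s =>
  ⟨Finsupp.single ⟨⟨p, le_rfl⟩, s⟩ 1, by
    rw [freeCoverπ_app_single, one_zsmul]
    exact ConcreteCategory.congr_hom (F.map_id p) s⟩

lemma freeCover_map_injective {p q : P} (h : p ⟶ q) : Function.Injective (F.freeCover.map h) :=
  Finsupp.mapDomain_injective (F.elementsBelowMap_injective _)

instance (p : P) : Module.Free ℤ (F.freeCover.obj p) :=
  inferInstanceAs (Module.Free ℤ (F.ElementsBelow p →₀ ℤ))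

instance {p q : P} (h : p ⟶ q) :
    Module.Free ℤ (F.freeCover.obj q ⧸ (F.freeCover.map h).hom.range) :=
  Finsupp.free_quotient_range_mapDomain _

instance (p : P) : Epi (F.freeCoverπ.app p) :=
  (AddCommGrpCat.epi_iff_surjective _).2 (F.freeCoverπ_app_surjective p)

instance : Epi F.freeCoverπ := NatTrans.epi_of_epi_app _

noncomputable def retractFreeCover [Projective F] : Retract F F.freeCover where
  i := Projective.factorThru (𝟙 F) F.freeCoverπ
  r := F.freeCoverπ
  retract := Projective.factorThru_comp _ _

end CategoryTheory.Functor

namespace CategoryTheory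

variable {C : Type*} [Category C]

lemma NatTrans.map_range_le_comap {F G : C ⥤ AddCommGrpCat.{u}} (α : F ⟶ G) {p q : C}
    (f : p ⟶ q) : (F.map f).hom.range ≤ (G.map f).hom.range.comap (α.app q).hom := by
  rintro _ ⟨x, rfl⟩
  exact ⟨α.app p x, (ConcreteCategory.congr_hom (α.naturality f) x).symm⟩

namespace Retract

variable {F G : C ⥤ AddCommGrpCat.{u}}

lemma app_leftInverse (h : Retract F G) (p : C) : Function.LeftInverse (h.r.app p) (h.i.app p) :=
  ConcreteCategory.congr_hom (NatTrans.congr_app h.retract p)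

lemma map_injective (h : Retract F G) {p q : C} (f : p ⟶ q)
    (hG : Function.Injective (G.map f)) : Function.Injective (F.map f) := by
  intro x y hxy
  have hi : ∀ z, G.map f (h.i.app p z) = h.i.app q (F.map f z) := fun z =>
    (ConcreteCategory.congr_hom (h.i.naturality f) z).symm
  exact (h.app_leftInverse p).injective (hG (by rw [hi, hi, hxy]))

lemma free_obj (h : Retract F G) (p : C) [Module.Free ℤ (G.obj p)] : Module.Free ℤ (F.obj p) :=
  Module.Free.of_injective (h.i.app p).hom.toIntLinearMap (h.app_leftInverse p).injective

lemma free_quotient_range (h : Retract F G) {p q : C} (f : p ⟶ q)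
    [Module.Free ℤ (G.obj q ⧸ (G.map f).hom.range)] :
    Module.Free ℤ (F.obj q ⧸ (F.map f).hom.range) := by
  let φ := QuotientAddGroup.map _ _ (h.i.app q).hom (NatTrans.map_range_le_comap h.i f)
  let ψ := QuotientAddGroup.map _ _ (h.r.app q).hom (NatTrans.map_range_le_comap h.r f)
  have hψφ : Function.LeftInverse ψ φ := by
    rintro ⟨x⟩
    exact congrArg QuotientAddGroup.mk (h.app_leftInverse q x)
  exact Module.Free.of_injective φ.toIntLinearMap hψφ.injective

end Retract

def natTransOfLT {P : Type*} [PartialOrder P] {C : Type*} [Category C] {F G : P ⥤ C}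
    (app : ∀ p, F.obj p ⟶ G.obj p)
    (naturality : ∀ p q (h : p < q), F.map (homOfLE h.le) ≫ app q = app p ≫ G.map (homOfLE h.le)) :
    F ⟶ G where
  app := app
  naturality p q f := by
    obtain rfl | hlt := (leOfHom f).eq_or_lt
    · rw [Subsingleton.elim f (𝟙 p), F.map_id, G.map_id, Category.id_comp, Category.comp_id]
    · exact naturality p q hlt

theorem Functor.projective_of_isBot_of_free_quotient {P : Type v} [PartialOrder P] {a : P}
    (ha : IsBot a) (hlt : ∀ p q : P, p < q → p = a) (F : P ⥤ AddCommGrpCat.{u})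
    [Module.Free ℤ (F.obj a)]
    (hinj : ∀ p (h : a < p), Function.Injective (F.map (homOfLE h.le)))
    (hfree : ∀ p (h : a < p), Module.Free ℤ (F.obj p ⧸ (F.map (homOfLE h.le)).hom.range)) :
    Projective F := by
  refine ⟨fun {E X} f e _ => ?_⟩
  have hsurj : ∀ p, Function.Surjective (e.app p) := fun p =>
    (AddCommGrpCat.epi_iff_surjective _).1 inferInstance
  obtain ⟨la, hla⟩ := (e.app a).hom.exists_comp_eq_of_free (hsurj a) (f.app a).hom
  have hl : ∀ p, ∃ l : F.obj p ⟶ E.obj p, l ≫ e.app p = f.app p ∧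
      F.map (homOfLE (ha p)) ≫ l = AddCommGrpCat.ofHom la ≫ E.map (homOfLE (ha p)) := by
    intro p
    obtain rfl | hap := (ha p).eq_or_lt
    · refine ⟨AddCommGrpCat.ofHom la, AddCommGrpCat.hom_ext hla, ?_⟩
      simp
    have := hfree p hap
    have hcompat : (AddCommGrpCat.ofHom la ≫ E.map (homOfLE hap.le)) ≫ e.app p =
        F.map (homOfLE hap.le) ≫ f.app p := by
      rw [Category.assoc, e.naturality, ← Category.assoc,
        (AddCommGrpCat.hom_ext hla : AddCommGrpCat.ofHom la ≫ e.app a = f.app a), f.naturality]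
    obtain ⟨l, hle, hli⟩ := (F.map (homOfLE hap.le)).hom.exists_lift_extending_of_free_quotient
      (hinj p hap) (e.app p).hom (hsurj p) (f.app p).hom _ (congrArg AddCommGrpCat.Hom.hom hcompat)
    exact ⟨AddCommGrpCat.ofHom l, AddCommGrpCat.hom_ext hle, AddCommGrpCat.hom_ext hli⟩
  choose l hle hlnat using hl
  have hla' : l a = AddCommGrpCat.ofHom la := by simpa using hlnat a
  refine ⟨natTransOfLT l fun p q hpq => ?_, NatTrans.ext (funext hle)⟩
  obtain rfl := hlt p q hpq
  rw [hlnat q, hla']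

end CategoryTheory

/-- Let `P` be the pushout category `b ⟵ a ⟶ c`, i.e. a poset with
exactly three elements: a unique minimal element `a` and two incomparable maximal
elements `b, c` (graded with `deg a = 0`, `deg b = deg c = 1`).  A functor
`F : P ⥤ Ab` is projective in `Ab^P` if and only if `F(a)`, `F(b)/Im F(a→b)` and
`F(c)/Im F(a→c)` are free abelian groups and both `F(a→b)` and `F(a→c)` are
monomorphisms. -/
theorem pushout_projective_iff
    {P : Type} [PartialOrder P] (a b c : P)
    (hab : a < b) (hac : a < c)
    (hbc : ¬ b ≤ c) (hcb : ¬ c ≤ b)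
    (hall : ∀ p : P, p = a ∨ p = b ∨ p = c)
    (F : P ⥤ AddCommGrpCat) :
    Projective F ↔
      (Module.Free ℤ (F.obj a) ∧
       Module.Free ℤ (F.obj b ⧸ (F.map (homOfLE hab.le)).hom.range) ∧
       Module.Free ℤ (F.obj c ⧸ (F.map (homOfLE hac.le)).hom.range) ∧
       Function.Injective (F.map (homOfLE hab.le)) ∧
       Function.Injective (F.map (homOfLE hac.le))) := by
  constructor
  · intro _
    have h := F.retractFreeCover
    exact ⟨h.free_obj a, h.free_quotient_range _, h.free_quotient_range _,
      h.map_injective _ (F.freeCover_map_injective _),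
      h.map_injective _ (F.freeCover_map_injective _)⟩
  · rintro ⟨_, hfreeb, hfreec, hinjb, hinjc⟩
    have hbot : IsBot a := fun p => by rcases hall p with rfl | rfl | rfl <;> order
    have hlt : ∀ p q : P, p < q → p = a := fun p q hpq => by
      refine (hall p).resolve_right ?_
      rintro (rfl | rfl) <;> rcases hall q with rfl | rfl | rfl <;> order
    refine F.projective_of_isBot_of_free_quotient hbot hlt (fun p hp => ?_) (fun p hp => ?_) <;>
      rcases hall p with rfl | rfl | rfl
    all_goals first | exact absurd hp (lt_irrefl _) | assumption
end

section
/- Let P be the pushout category a → b, a → c and F : P → Ab a functor such that F(a→b) and F(a→c) are monomorphisms. Then colim₁ F = 0 and colimᵢ F = 0 for all i ≥ 1. -/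
/-!
For every functor `G` on the span `b ← a → c` the sequence
`G(a) → G(b) ⊞ G(c) → colim G → 0`, whose first map is `(G(a→b), -G(a→c))`, is exact.
A projective `G` has monic transition maps, being a retract of `q ↦ ∐_{p ≤ q} G(p)`, whose
transition maps are inclusions of subcoproducts; so on projectives the sequence is short exact.
Applied to a projective resolution of `F` it gives a short exact sequence of complexes whose first
two terms resolve `F(a)` and `F(b) ⊞ F(c)`, evaluation being exact. The long exact homology
sequence then kills `colimᵢ F` for `i ≥ 2` and embeds `colim₁ F` into the kernel of
`F(a) → F(b) ⊞ F(c)`, which is zero since `F(a→b)` is monic.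
-/

open CategoryTheory CategoryTheory.Limits

universe u v w

section Homological

open HomologicalComplex

variable {C : Type*} {D : Type*} [Category C] [Abelian C] [Category D] [Abelian D]

lemma CategoryTheory.Functor.preservesHomology_of_id_eq_add {Φ Ψ₁ Ψ₂ : C ⥤ D}
    [Φ.PreservesZeroMorphisms] [Ψ₁.PreservesZeroMorphisms] [Ψ₂.PreservesZeroMorphisms]
    [Ψ₁.PreservesHomology] [Ψ₂.PreservesHomology] (p₁ : Φ ⟶ Ψ₁) (i₁ : Ψ₁ ⟶ Φ) (p₂ : Φ ⟶ Ψ₂)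
    (i₂ : Ψ₂ ⟶ Φ) (h : p₁ ≫ i₁ + p₂ ≫ i₂ = 𝟙 Φ) : Φ.PreservesHomology :=
  Φ.preservesHomology_of_map_exact fun S hS => by
    have hid : S.mapNatTrans p₁ ≫ S.mapNatTrans i₁ + S.mapNatTrans p₂ ≫ S.mapNatTrans i₂ =
        𝟙 (S.map Φ) := by
      ext <;> exact NatTrans.congr_app h _
    rw [ShortComplex.exact_iff_isZero_homology, IsZero.iff_id_eq_zero,
      ← ShortComplex.homologyMap_id, ← hid, ShortComplex.homologyMap_add,
      ShortComplex.homologyMap_comp, ShortComplex.homologyMap_comp,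
      ((S.map Ψ₁).exact_iff_isZero_homology.1 (hS.map Ψ₁)).eq_zero_of_tgt
        (ShortComplex.homologyMap (S.mapNatTrans p₁)),
      ((S.map Ψ₂).exact_iff_isZero_homology.1 (hS.map Ψ₂)).eq_zero_of_tgt
        (ShortComplex.homologyMap (S.mapNatTrans p₂)),
      zero_comp, zero_comp, add_zero]

lemma CategoryTheory.ShortComplex.ShortExact.isZero_homology_succ_X₃
    {S : ShortComplex (ChainComplex D ℕ)} (hS : S.ShortExact) (n : ℕ)
    (h₂ : IsZero (S.X₂.homology (n + 1))) [Mono (HomologicalComplex.homologyMap S.f n)] :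
    IsZero (S.X₃.homology (n + 1)) := by
  have rel : (ComplexShape.down ℕ).Rel (n + 1) n := rfl
  have : Mono (hS.δ (n + 1) n rel) :=
    (hS.homology_exact₃ (n + 1) n rel).mono_g (h₂.eq_of_src _ _)
  have hδ : hS.δ (n + 1) n rel = 0 := by
    rw [← cancel_mono (HomologicalComplex.homologyMap S.f n), hS.δ_comp, zero_comp]
  rw [IsZero.iff_id_eq_zero, ← cancel_mono (hS.δ (n + 1) n rel), hδ, comp_zero, zero_comp]

namespace CategoryTheory.ProjectiveResolution

variable {X : C} (R : ProjectiveResolution X)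

lemma isZero_homology_mapHomologicalComplex (Φ : C ⥤ D) [Φ.Additive] [Φ.PreservesHomology] {n : ℕ}
    (hn : n ≠ 0) : IsZero (((Φ.mapHomologicalComplex _).obj R.complex).homology n) :=
  (isZero_single_obj_homology _ 0 (Φ.obj X) n hn).of_iso
    (asIso (homologyMap ((Φ.mapHomologicalComplex _).map R.π) n) ≪≫
      (homologyFunctor D _ n).mapIso ((singleMapHomologicalComplex Φ _ 0).app X))

lemma opcyclesMap_comp_fromLeftDerivedZero' {Φ Ψ : C ⥤ D} [Φ.Additive] [Ψ.Additive]
    (α : Φ ⟶ Ψ) :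
    opcyclesMap ((NatTrans.mapHomologicalComplex α _).app R.complex) 0 ≫
      R.fromLeftDerivedZero' Ψ = R.fromLeftDerivedZero' Φ ≫ α.app X := by
  simp only [← cancel_epi (pOpcycles _ _), p_opcyclesMap_assoc,
    pOpcycles_comp_fromLeftDerivedZero', pOpcycles_comp_fromLeftDerivedZero'_assoc,
    NatTrans.mapHomologicalComplex_app_f]
  exact (α.naturality _).symm

lemma mono_homologyMap_zero {Φ Ψ : C ⥤ D} [Φ.Additive] [Ψ.Additive]
    [PreservesFiniteColimits Φ] [PreservesFiniteColimits Ψ] (α : Φ ⟶ Ψ) [Mono (α.app X)] :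
    Mono (homologyMap ((NatTrans.mapHomologicalComplex α _).app R.complex) 0) := by
  have h := R.opcyclesMap_comp_fromLeftDerivedZero' α
  have : Mono (opcyclesMap ((NatTrans.mapHomologicalComplex α _).app R.complex) 0) := by
    rw [← IsIso.eq_comp_inv] at h
    rw [h]
    infer_instance
  exact mono_of_mono_fac (homologyι_naturality _ 0)

end CategoryTheory.ProjectiveResolution

theorem CategoryTheory.ShortComplex.isZero_leftDerived_succ_X₃_obj [HasProjectiveResolutions C]
    (S : ShortComplex (C ⥤ D)) [S.X₁.Additive] [S.X₂.Additive] [S.X₃.Additive]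
    [S.X₁.PreservesHomology] [S.X₂.PreservesHomology]
    (hS : ∀ (Y : C) [Projective Y], (S.map ((evaluation C D).obj Y)).ShortExact)
    (X : C) [Mono (S.f.app X)] (n : ℕ) : IsZero ((S.X₃.leftDerived (n + 1)).obj X) := by
  have := S.X₁.preservesFiniteColimits_of_preservesHomology
  have := S.X₂.preservesFiniteColimits_of_preservesHomology
  let R := projectiveResolution X
  let T : ShortComplex (ChainComplex D ℕ) :=
    ShortComplex.mk ((NatTrans.mapHomologicalComplex S.f _).app R.complex)
      ((NatTrans.mapHomologicalComplex S.g _).app R.complex) (by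
        ext k
        exact NatTrans.congr_app S.zero (R.complex.X k))
  have hT : T.ShortExact :=
    shortExact_of_degreewise_shortExact _ fun k => hS (R.complex.X k)
  have : Mono (HomologicalComplex.homologyMap T.f n) := by
    cases n with
    | zero => exact R.mono_homologyMap_zero S.f
    | succ n => exact (R.isZero_homology_mapHomologicalComplex S.X₁ n.succ_ne_zero).mono _
  have h₂ := R.isZero_homology_mapHomologicalComplex S.X₂ n.succ_ne_zero
  exact (hT.isZero_homology_succ_X₃ n h₂).of_iso (R.isoLeftDerivedObj S.X₃ (n + 1))

end Homological

namespace CategoryTheory.Functor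

variable {P : Type u} [Preorder P] {D : Type w} [Category.{v} D] [HasCoproducts.{u} D]
  (G : P ⥤ D)

noncomputable def sigmaBelow : P ⥤ D where
  obj q := ∐ fun p : {p // p ≤ q} => G.obj p
  map f := Limits.Sigma.map' (fun p => ⟨p.1, p.2.trans (leOfHom f)⟩) fun _ => 𝟙 _
  map_id q := by
    ext
    simp
  map_comp f g := by
    ext
    simp

noncomputable def sigmaBelowπ : G.sigmaBelow ⟶ G where
  app q := Limits.Sigma.desc fun p => G.map (homOfLE p.2)
  naturality q r f := by
    refine Limits.Sigma.hom_ext _ _ fun p => ?_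
    simp only [sigmaBelow, Limits.Sigma.ι_comp_map'_assoc, Category.id_comp,
      colimit.ι_desc_assoc, colimit.ι_desc, Cofan.mk_ι_app, ← G.map_comp]
    rfl

instance : Epi G.sigmaBelowπ := by
  suffices ∀ q, Epi (G.sigmaBelowπ.app q) from NatTrans.epi_of_epi_app _
  intro q
  have : Limits.Sigma.ι (fun p : {p // p ≤ q} => G.obj p) ⟨q, le_rfl⟩ ≫ G.sigmaBelowπ.app q =
      𝟙 _ := by
    simp [sigmaBelowπ]
  exact epi_of_epi_fac this

instance [MonoCoprod D] {q r : P} (f : q ⟶ r) : Mono (G.sigmaBelow.map f) :=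
  MonoCoprod.mono_map'_of_injective (fun p : {p // p ≤ r} => G.obj p)
    (fun p : {p // p ≤ q} => (⟨p.1, p.2.trans (leOfHom f)⟩ : {p // p ≤ r}))
    fun _ _ h => Subtype.ext (congrArg Subtype.val h :)

theorem mono_map_of_projective [MonoCoprod D] [Projective G] {q r : P} (f : q ⟶ r) :
    Mono (G.map f) := by
  let s := Projective.factorThru (𝟙 G) G.sigmaBelowπ
  have hs : s.app q ≫ G.sigmaBelowπ.app q = 𝟙 _ := by
    rw [← NatTrans.comp_app, Projective.factorThru_comp, NatTrans.id_app]
  have := mono_of_mono_fac hs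
  have : Mono (G.map f ≫ s.app r) := by
    rw [s.naturality]
    infer_instance
  exact mono_of_mono _ (s.app r)

end CategoryTheory.Functor

section Span

variable {P : Type u} {D : Type w} [Category.{v} D]

structure IsSpan [PartialOrder P] (a b c : P) : Prop where
  lt_left : a < b
  lt_right : a < c
  not_left_le_right : ¬ b ≤ c
  not_right_le_left : ¬ c ≤ b
  eq_or_eq_or_eq : ∀ p, p = a ∨ p = b ∨ p = c

namespace IsSpan

variable [PartialOrder P] {a b c : P} (h : IsSpan a b c)
include h

lemma le_right_of_not_le_left {p : P} (hp : ¬ p ≤ b) : p ≤ c := by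
  rcases h.eq_or_eq_or_eq p with rfl | rfl | rfl
  exacts [absurd h.lt_left.le hp, absurd le_rfl hp, le_rfl]

lemma eq_of_le_left_of_le_right {p : P} (hb : p ≤ b) (hc : p ≤ c) : p = a := by
  rcases h.eq_or_eq_or_eq p with rfl | rfl | rfl
  exacts [rfl, absurd hc h.not_left_le_right, absurd hb h.not_right_le_left]

end IsSpan

section

variable [Preorder P] [Preadditive D] [HasBinaryBiproducts D]

noncomputable abbrev evalBiprod (b c : P) : (P ⥤ D) ⥤ D where
  obj G := G.obj b ⊞ G.obj c
  map φ := biprod.map (φ.app b) (φ.app c)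

instance (b c : P) : (evalBiprod (D := D) b c).Additive where
  map_add := by
    intros
    apply biprod.hom_ext <;> simp [Preadditive.add_comp, Preadditive.comp_add]

noncomputable abbrev evalDiff {a b c : P} (hab : a ≤ b) (hac : a ≤ c) :
    (evaluation P D).obj a ⟶ evalBiprod b c where
  app G := biprod.lift (G.map (homOfLE hab)) (-G.map (homOfLE hac))
  naturality _ _ φ := by apply biprod.hom_ext <;> simp

lemma mono_evalDiff_app {a b c : P} (hab : a ≤ b) (hac : a ≤ c) (G : P ⥤ D)
    [Mono (G.map (homOfLE hab))] : Mono ((evalDiff hab hac).app G) :=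
  mono_of_mono_fac (biprod.lift_fst _ _)

lemma map_inl_comp_eq_of_evalDiff_app_comp_eq_zero {a b c : P} (hab : a ≤ b) (hac : a ≤ c)
    (G : P ⥤ D) {T : D} {ψ : G.obj b ⊞ G.obj c ⟶ T} (hψ : (evalDiff hab hac).app G ≫ ψ = 0) :
    G.map (homOfLE hab) ≫ biprod.inl ≫ ψ = G.map (homOfLE hac) ≫ biprod.inr ≫ ψ := by
  rw [← sub_eq_zero, ← hψ]
  simp [biprod.lift_eq, sub_eq_add_neg]

variable [HasColimitsOfShape P D]

noncomputable abbrev evalBiprodToColim (b c : P) : evalBiprod b c ⟶ (colim : (P ⥤ D) ⥤ D) where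
  app G := biprod.desc (colimit.ι G b) (colimit.ι G c)
  naturality _ _ φ := by apply biprod.hom_ext' <;> simp

lemma evalDiff_app_comp_evalBiprodToColim_app {a b c : P} (hab : a ≤ b) (hac : a ≤ c)
    (G : P ⥤ D) : (evalDiff hab hac).app G ≫ (evalBiprodToColim b c).app G = 0 := by
  simp only [biprod.lift_desc, Preadditive.neg_comp, colimit.w, add_neg_cancel]

lemma evalDiff_comp_evalBiprodToColim {a b c : P} (hab : a ≤ b) (hac : a ≤ c) :
    evalDiff (D := D) hab hac ≫ evalBiprodToColim b c = 0 := by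
  ext G
  exact evalDiff_app_comp_evalBiprodToColim_app hab hac G

end

namespace IsSpan

variable [PartialOrder P] {a b c : P} (h : IsSpan a b c)
  [Preadditive D] [HasBinaryBiproducts D] [HasColimitsOfShape P D]

noncomputable abbrev colimPresentation : ShortComplex ((P ⥤ D) ⥤ D) :=
  ShortComplex.mk _ _ (evalDiff_comp_evalBiprodToColim (D := D) h.lt_left.le h.lt_right.le)

variable (G : P ⥤ D) {T : D} (ψ : G.obj b ⊞ G.obj c ⟶ T)

open Classical in
noncomputable def coconeOfCompEqZero (hψ : (evalDiff h.lt_left.le h.lt_right.le).app G ≫ ψ = 0) :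
    Cocone G where
  pt := T
  ι :=
    { app p := if hp : p ≤ b then G.map (homOfLE hp) ≫ biprod.inl ≫ ψ
        else G.map (homOfLE (h.le_right_of_not_le_left hp)) ≫ biprod.inr ≫ ψ
      naturality p q f := by
        dsimp only [Functor.const_obj_obj, Functor.const_obj_map]
        rw [Category.comp_id]
        by_cases hq : q ≤ b
        · rw [dif_pos hq, dif_pos (f.le.trans hq), ← G.map_comp_assoc]
          rfl
        by_cases hp : p ≤ b
        · obtain rfl := h.eq_of_le_left_of_le_right hp (f.le.trans (h.le_right_of_not_le_left hq))
          rw [dif_pos hp, dif_neg hq, ← G.map_comp_assoc]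
          exact (map_inl_comp_eq_of_evalDiff_app_comp_eq_zero _ _ G hψ).symm
        · rw [dif_neg hp, dif_neg hq, ← G.map_comp_assoc]
          rfl }

noncomputable def isColimitCokernelCofork :
    IsColimit (CokernelCofork.ofπ _
      (evalDiff_app_comp_evalBiprodToColim_app h.lt_left.le h.lt_right.le G)) :=
  CokernelCofork.IsColimit.ofπ _ _ (fun ψ hψ => colimit.desc G (h.coconeOfCompEqZero G ψ hψ))
    (fun ψ hψ => by
      apply biprod.hom_ext'
      · simp [coconeOfCompEqZero]
      · simp [coconeOfCompEqZero, h.not_right_le_left])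
    (fun ψ hψ m hm => by
      refine colimit.hom_ext fun p => ?_
      simp only [colimit.ι_desc, coconeOfCompEqZero]
      split_ifs with hp
      · rw [← colimit.w G (homOfLE hp), Category.assoc, ← hm]
        simp
      · rw [← colimit.w G (homOfLE (h.le_right_of_not_le_left hp)), Category.assoc, ← hm]
        simp)

end IsSpan

instance [Preorder P] [Abelian D] (b c : P) : (evalBiprod (D := D) b c).PreservesHomology :=
  Functor.preservesHomology_of_id_eq_add (Ψ₁ := (evaluation P D).obj b)
    (Ψ₂ := (evaluation P D).obj c) { app _ := biprod.fst } { app _ := biprod.inl }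
    { app _ := biprod.snd } { app _ := biprod.inr }
    (NatTrans.ext <| funext fun _ => biprod.total)

lemma IsSpan.shortExact_map_evaluation [PartialOrder P] [Abelian D] [HasCoproducts.{u} D]
    [HasColimitsOfShape P D] {a b c : P} (h : IsSpan a b c) (G : P ⥤ D) [Projective G] :
    (h.colimPresentation.map ((evaluation _ D).obj G)).ShortExact :=
  have := G.mono_map_of_projective (homOfLE h.lt_left.le)
  { exact := ShortComplex.exact_of_g_is_cokernel _ (h.isColimitCokernelCofork G)
    mono_f := mono_evalDiff_app h.lt_left.le h.lt_right.le G
    epi_g := epi_of_isColimit_cofork (h.isColimitCokernelCofork G) }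

end Span

theorem pushout_monic_colim_acyclic_general
    {P : Type} [PartialOrder P]
    [HasProjectiveResolutions (P ⥤ AddCommGrpCat)]
    (a b c : P)
    (hab : a < b) (hac : a < c)
    (hbc : ¬ b ≤ c) (hcb : ¬ c ≤ b)
    (hall : ∀ p : P, p = a ∨ p = b ∨ p = c)
    (F : P ⥤ AddCommGrpCat)
    (hmono₁ : Function.Injective (F.map (homOfLE hab.le))) :
    ∀ i : ℕ, 1 ≤ i →
      IsZero (((colim : (P ⥤ AddCommGrpCat) ⥤ AddCommGrpCat).leftDerived i).obj F) := by
  intro i hi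
  obtain ⟨n, rfl⟩ : ∃ n, i = n + 1 := ⟨i - 1, by omega⟩
  have hP : IsSpan a b c := ⟨hab, hac, hbc, hcb, hall⟩
  have : Mono (F.map (homOfLE hab.le)) := ConcreteCategory.mono_of_injective _ hmono₁
  have := mono_evalDiff_app hab.le hac.le F
  exact hP.colimPresentation.isZero_leftDerived_succ_X₃_obj hP.shortExact_map_evaluation F n

/-- Let `P` be the pushout category `b ⟵ a ⟶ c` (a poset with a
unique minimal element `a` and two incomparable maximal elements `b, c`) and let
`F : P ⥤ Ab` be a functor such that `F(a→b)` and `F(a→c)` are monomorphisms.  Then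
the left derived colimits `colimᵢ F` vanish for all `i ≥ 1` (in particular
`colim₁ F = 0`). -/
theorem pushout_monic_colim_acyclic
    {P : Type} [PartialOrder P]
    [HasProjectiveResolutions (P ⥤ AddCommGrpCat)]
    (a b c : P)
    (hab : a < b) (hac : a < c)
    (hbc : ¬ b ≤ c) (hcb : ¬ c ≤ b)
    (hall : ∀ p : P, p = a ∨ p = b ∨ p = c)
    (F : P ⥤ AddCommGrpCat)
    (hmono₁ : Function.Injective (F.map (homOfLE hab.le)))
    (hmono₂ : Function.Injective (F.map (homOfLE hac.le))) :
    ∀ i : ℕ, 1 ≤ i →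
      IsZero (((colim : (P ⥤ AddCommGrpCat) ⥤ AddCommGrpCat).leftDerived i).obj F) :=
  pushout_monic_colim_acyclic_general a b c hab hac hbc hcb hall F hmono₁
end

section
/- Let P be a graded poset and F : P → Ab an injective object of Ab^P. Then for every object i₀, the subgroup ker(i₀) = ∩ over nonidentity α : i₀ → i of ker F(α) is an injective abelian group (i.e., divisible). -/
/-!
Let `S` be the skyscraper functor at `i₀`: `ℤ` at `i₀`, zero elsewhere. A natural
transformation `S ⟶ F` is determined by the image `x ∈ F i₀` of `1`, and naturality along
the arrows `i₀ < i` says exactly that `x` lies in `ker(i₀)`; so `ker(i₀) ≅ Hom(S, F)`.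
For `n ≠ 0`, multiplication by `n` is a monomorphism `S ⟶ S`, and injectivity of `F` lets
every `S ⟶ F` be extended along it, i.e. divided by `n`. Hence `ker(i₀)` is divisible,
and divisible abelian groups are injective by Baer's criterion.
-/

open CategoryTheory

universe u

variable {P : Type} [PartialOrder P]

/-- `ker F i₀` is the intersection of the kernels of `F.map α` over all nonidentity
morphisms `α : i₀ ⟶ i` (equal to all of `F.obj i₀` if there are none). -/
def kerSubgroup (F : P ⥤ AddCommGrpCat) (i₀ : P) : AddSubgroup (F.obj i₀) :=
  ⨅ i : {i : P // i₀ < i}, (F.map (homOfLE i.2.le)).hom.ker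

theorem CategoryTheory.Injective.exists_zsmul_eq {C : Type*} [Category C] [Preadditive C]
    {X J : C} [Injective J] {n : ℤ} [Mono (n • 𝟙 X)] (g : X ⟶ J) : ∃ h : X ⟶ J, n • h = g :=
  ⟨Injective.factorThru g (n • 𝟙 X), by
    simpa only [Preadditive.zsmul_comp, Category.id_comp] using
      Injective.comp_factorThru g (n • 𝟙 X)⟩

section Skyscraper

variable (i₀ : P)

/- The stalks are all subgroups of `ℤ`, so that the skyscraper functor is built without
case distinctions on the type of its values. -/
def skyscraperStalk (j : P) : AddSubgroup ℤ where
  carrier := {m | j ≠ i₀ → m = 0}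
  zero_mem' _ := rfl
  add_mem' ha hb h := by rw [ha h, hb h, add_zero]
  neg_mem' ha h := by rw [ha h, neg_zero]

open Classical in
noncomputable def skyscraperMap (j k : P) :
    ULift.{u} (skyscraperStalk i₀ j) →+ ULift.{u} (skyscraperStalk i₀ k) where
  toFun m := ⟨⟨if k = i₀ then m.down else 0, fun hk => if_neg hk⟩⟩
  map_zero' := by ext; simp
  map_add' a b := by ext; split_ifs <;> simp

noncomputable def skyscraper : P ⥤ AddCommGrpCat.{u} where
  obj j := AddCommGrpCat.of (ULift (skyscraperStalk i₀ j))
  map {j k} _ := AddCommGrpCat.ofHom (skyscraperMap i₀ j k)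
  map_id j := by
    ext m : 2
    refine ULift.ext _ _ (Subtype.ext ?_)
    by_cases hj : j = i₀
    · simp [skyscraperMap, hj]
    · simp [skyscraperMap, hj, m.down.2 hj]
  map_comp {j k l} f g := by
    ext m : 2
    refine ULift.ext _ _ (Subtype.ext ?_)
    by_cases hl : l = i₀
    · by_cases hk : k = i₀
      · simp [skyscraperMap, hl, hk]
      · have hj : j ≠ i₀ := fun hj =>
          hk (le_antisymm (hl ▸ leOfHom g) (hj ▸ leOfHom f))
        simp [skyscraperMap, hl, hk, m.down.2 hj]
    · simp [skyscraperMap, hl]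

def skyscraperGen : (skyscraper.{u} i₀).obj i₀ :=
  ⟨⟨1, fun h => absurd rfl h⟩⟩

open Classical in
@[simp]
theorem skyscraper_map_apply_coe {j k : P} (f : j ⟶ k) (m : (skyscraper.{u} i₀).obj j) :
    (((skyscraper.{u} i₀).map f m).down : ℤ) = if k = i₀ then (m.down : ℤ) else 0 :=
  rfl

variable {i₀}

theorem skyscraper_obj_ext {j : P} {a b : (skyscraper.{u} i₀).obj j}
    (h : (a.down : ℤ) = b.down) : a = b :=
  ULift.ext _ _ (Subtype.ext h)

theorem skyscraper_map_gen_of_lt {i : P} (hi : i₀ < i) :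
    (skyscraper.{u} i₀).map (homOfLE hi.le) (skyscraperGen i₀) = 0 :=
  skyscraper_obj_ext (by simp [hi.ne']; rfl)

theorem mono_zsmul_id_skyscraper {n : ℤ} (hn : n ≠ 0) : Mono (n • 𝟙 (skyscraper.{u} i₀)) := by
  have (j : P) : Mono ((n • 𝟙 (skyscraper.{u} i₀)).app j) := by
    rw [NatTrans.app_zsmul, AddCommGrpCat.mono_iff_injective]
    intro a b hab
    exact skyscraper_obj_ext <| smul_right_injective ℤ hn <| congrArg (fun z => (z.down : ℤ)) hab
  exact NatTrans.mono_of_mono_app _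

end Skyscraper

section KerSubgroup

variable {F : P ⥤ AddCommGrpCat.{u}} {i₀ : P}

theorem map_eq_zero_of_mem_kerSubgroup {x : F.obj i₀} (hx : x ∈ kerSubgroup F i₀) {i : P}
    (f : i₀ ⟶ i) (hi : i ≠ i₀) : F.map f x = 0 :=
  AddSubgroup.mem_iInf.mp hx ⟨i, lt_of_le_of_ne (leOfHom f) (Ne.symm hi)⟩

theorem app_skyscraperGen_mem_kerSubgroup (φ : skyscraper i₀ ⟶ F) :
    φ.app i₀ (skyscraperGen i₀) ∈ kerSubgroup F i₀ := by
  refine AddSubgroup.mem_iInf.mpr fun ⟨i, hi⟩ => ?_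
  rw [AddMonoidHom.mem_ker, ← NatTrans.naturality_apply, skyscraper_map_gen_of_lt hi, map_zero]

open Classical in
noncomputable def skyscraperHomOfMemApp (x : F.obj i₀) (j : P) :
    ULift.{u} (skyscraperStalk i₀ j) →+ F.obj j where
  toFun m := if h : i₀ = j then (m.down : ℤ) • F.map (eqToHom h) x else 0
  map_zero' := by split_ifs <;> simp
  map_add' a b := by split_ifs <;> simp [add_smul]

theorem skyscraperHomOfMemApp_naturality {x : F.obj i₀} (hx : x ∈ kerSubgroup F i₀) {j k : P}
    (f : j ⟶ k) (m : ULift.{u} (skyscraperStalk i₀ j)) :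
    skyscraperHomOfMemApp x k (skyscraperMap i₀ j k m) =
      F.map f (skyscraperHomOfMemApp x j m) := by
  by_cases hj : i₀ = j
  · subst hj
    by_cases hk : i₀ = k
    · subst hk
      simp [skyscraperHomOfMemApp, skyscraperMap, Subsingleton.elim f (𝟙 _)]
    · simp [skyscraperHomOfMemApp, skyscraperMap, Ne.symm hk,
        map_eq_zero_of_mem_kerSubgroup hx f (Ne.symm hk)]
  · simp [skyscraperHomOfMemApp, skyscraperMap, m.down.2 (Ne.symm hj), hj]

noncomputable def skyscraperHomOfMem {x : F.obj i₀} (hx : x ∈ kerSubgroup F i₀) :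
    skyscraper i₀ ⟶ F where
  app j := ConcreteCategory.ofHom (skyscraperHomOfMemApp x j)
  naturality j k f := by
    ext m : 2
    exact skyscraperHomOfMemApp_naturality hx f m

theorem skyscraperHomOfMem_app_gen {x : F.obj i₀} (hx : x ∈ kerSubgroup F i₀) :
    (skyscraperHomOfMem hx).app i₀ (skyscraperGen i₀) = x := by
  change skyscraperHomOfMemApp x i₀ (skyscraperGen i₀) = x
  simp [skyscraperHomOfMemApp, skyscraperGen]

theorem kerSubgroup_zsmul_surjective (hF : Injective F) (i₀ : P) {n : ℤ} (hn : n ≠ 0) :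
    Function.Surjective fun y : kerSubgroup F i₀ => n • y := by
  intro ⟨x, hx⟩
  have := mono_zsmul_id_skyscraper.{u} (i₀ := i₀) hn
  obtain ⟨φ, hφ⟩ := Injective.exists_zsmul_eq (n := n) (skyscraperHomOfMem hx)
  refine ⟨⟨_, app_skyscraperGen_mem_kerSubgroup φ⟩, Subtype.ext ?_⟩
  change n • φ.app i₀ (skyscraperGen i₀) = x
  rw [← skyscraperHomOfMem_app_gen hx, ← hφ]
  simp

end KerSubgroup

theorem ker_injective_of_injective_general
    (F : P ⥤ AddCommGrpCat) (hF : Injective F) (i₀ : P) :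
    Module.Injective ℤ ↥(kerSubgroup F i₀) :=
  letI := divisibleByOfSMulRightSurj _ ℤ fun hn => kerSubgroup_zsmul_surjective hF i₀ hn
  (Module.Baer.of_divisible _).injective

/-- Let `P` be a graded poset and `F : P ⥤ Ab` an injective object
of the functor category `Ab^P`.  Then for every object `i₀`, the subgroup
`ker(i₀) = ∩_{α : i₀ → i, α ≠ id} ker F(α)` is an injective abelian group
(equivalently, a divisible group), i.e. an injective `ℤ`-module. -/
theorem ker_injective_of_injective
    (deg : P → ℤ) (hmono : Monotone deg)
    (hcov : ∀ ⦃a b : P⦄, a ⋖ b → deg b = deg a + 1)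
    (F : P ⥤ AddCommGrpCat) (hF : Injective F) (i₀ : P) :
    Module.Injective ℤ ↥(kerSubgroup F i₀) :=
  ker_injective_of_injective_general F hF i₀
end
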